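/- If there exists a binary self-orthogonal [53, 5, 26] code, then for every m ≥ 1 there exists a binary self-orthogonal [31m + 22, 5, 16m + 10] code, and by the Griesmer bound d_{so}(31m + 22, 5) = d(31m + 22, 5) = 16m + 10. -/

import Mathlib

/-!
Appending `r` copies of the simplex code of dimension `k` to a self-orthogonal `[n, k, d]` code
adds `2 ^ (k - 1) * r` to the weight of every nonzero codeword, and keeps the code
self-orthogonal once `k ≥ 3`, because then every sum `∑ u, u i * u j` over `F₂ᵏ` is even.

Optimality is the Griesmer bound, proved by the residual-code induction: restricting a code to
the zero set of a codeword `c` of minimum weight gives an `[n - wt c, k - 1, ≥ ⌈wt c / 2⌉]` code,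
because `wt x + wt (x + c) = wt c + 2 wt (x restricted to the zeros of c)`. For `k = 5` and
`n = 31 m + 22` it gives `d ≤ 16 m + 10`.
-/

/-- A binary linear code is self-orthogonal if all pairs of codewords have zero
inner product over `F_2`. -/
def IsSO {n : ℕ} (C : Submodule (ZMod 2) (Fin n → ZMod 2)) : Prop :=
  ∀ x ∈ C, ∀ y ∈ C, ∑ i, x i * y i = 0

/-- `C` has minimum distance exactly `d`. -/
def IsMinDist {n : ℕ} (C : Submodule (ZMod 2) (Fin n → ZMod 2)) (d : ℕ) : Prop :=
  (∃ x ∈ C, x ≠ 0 ∧ hammingNorm x = d) ∧ ∀ x ∈ C, x ≠ 0 → d ≤ hammingNorm x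

/-- `d(n,k)`: the largest minimum distance among binary `[n,k]` linear codes. -/
noncomputable def dLin (n k : ℕ) : ℕ :=
  sSup {d | ∃ C : Submodule (ZMod 2) (Fin n → ZMod 2),
    Module.finrank (ZMod 2) C = k ∧ IsMinDist C d}

/-- `d_so(n,k)`: the largest minimum distance among binary self-orthogonal `[n,k]` codes. -/
noncomputable def dSO (n k : ℕ) : ℕ :=
  sSup {d | ∃ C : Submodule (ZMod 2) (Fin n → ZMod 2),
    IsSO C ∧ Module.finrank (ZMod 2) C = k ∧ IsMinDist C d}

open Finset

theorem hammingNorm_restrict {ι β : Type*} [Fintype ι] [Zero β] [DecidableEq β]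
    (p : ι → Prop) [DecidablePred p] (x : ι → β) :
    hammingNorm (fun i : {i // p i} => x i) = #{i | p i ∧ x i ≠ 0} := by
  rw [hammingNorm, ← Fintype.card_subtype, ← Fintype.card_subtype]
  exact Fintype.card_congr (Equiv.subtypeSubtypeEquivSubtypeInter p (fun i => x i ≠ 0))

theorem hammingNorm_add_hammingNorm_add {ι : Type*} [Fintype ι] (x c : ι → ZMod 2) :
    hammingNorm x + hammingNorm (x + c) =
      hammingNorm c + 2 * hammingNorm (fun i : {i // c i = 0} => x i) := by
  have key : ∀ a b : ZMod 2, ((if a ≠ 0 then 1 else 0) + if a + b ≠ 0 then 1 else 0) =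
      (if b ≠ 0 then 1 else 0) + 2 * if b = 0 ∧ a ≠ 0 then (1 : ℕ) else 0 := by decide
  rw [hammingNorm_restrict]
  simp only [hammingNorm, card_filter, ← sum_add_distrib, mul_sum, Pi.add_apply]
  exact sum_congr rfl fun i _ => key (x i) (c i)

section Weights

variable {α β γ : Type*} [Fintype α] [Fintype β] [Zero γ] [DecidableEq γ]

theorem hammingNorm_comp_equiv (σ : α ≃ β) (x : β → γ) :
    hammingNorm (x ∘ σ) = hammingNorm x := by
  simp only [hammingNorm, ← Fintype.card_subtype]
  exact Fintype.card_congr (σ.subtypeEquiv fun _ => Iff.rfl)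

theorem hammingNorm_sumElim (x : α → γ) (y : β → γ) :
    hammingNorm (Sum.elim x y) = hammingNorm x + hammingNorm y := by
  simp only [hammingNorm, ← Fintype.card_subtype, ← Fintype.card_sum]
  exact Fintype.card_congr Equiv.subtypeSum

theorem hammingNorm_comp_snd (x : β → γ) :
    hammingNorm (fun p : α × β => x p.2) = Fintype.card α * hammingNorm x := by
  rw [hammingNorm, hammingNorm, ← univ_product_univ,
    filter_product_right (fun b => x b ≠ 0), card_product, card_univ]

end Weights

/-- `griesmerLength k d = ∑ i < k, ⌈d / 2 ^ i⌉`, via `⌈⌈d / 2⌉ / 2 ^ i⌉ = ⌈d / 2 ^ (i + 1)⌉`. -/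
def griesmerLength : ℕ → ℕ → ℕ
  | 0, _ => 0
  | k + 1, d => d + griesmerLength k ((d + 1) / 2)

section Residual

variable {ι : Type*}

def residualMap (c : ι → ZMod 2) : (ι → ZMod 2) →ₗ[ZMod 2] ({i // c i = 0} → ZMod 2) :=
  LinearMap.funLeft (ZMod 2) (ZMod 2) Subtype.val

theorem residualMap_self (c : ι → ZMod 2) : residualMap c c = 0 :=
  funext fun i => i.2

variable [Fintype ι] {C : Submodule (ZMod 2) (ι → ZMod 2)} {c : ι → ZMod 2}

theorem card_zeros_add_hammingNorm (c : ι → ZMod 2) :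
    Fintype.card {i // c i = 0} + hammingNorm c = Fintype.card ι := by
  rw [Fintype.card_subtype, hammingNorm, card_filter_add_card_filter_not, card_univ]

theorem hammingNorm_le_two_mul_hammingNorm_residualMap (hc : c ∈ C)
    (hmin : ∀ x ∈ C, x ≠ 0 → hammingNorm c ≤ hammingNorm x) {x : ι → ZMod 2} (hx : x ∈ C)
    (hx0 : x ≠ 0) (hxc : x ≠ c) :
    hammingNorm c ≤ 2 * hammingNorm (residualMap c x) := by
  have hxc' : x + c ≠ 0 := fun h => hxc (funext fun i => CharTwo.add_eq_zero.mp (congrFun h i))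
  have := hammingNorm_add_hammingNorm_add x c
  have := hmin x hx hx0
  have := hmin (x + c) (C.add_mem hx hc) hxc'
  change hammingNorm c ≤ 2 * hammingNorm (fun i : {i // c i = 0} => x i)
  omega

theorem ker_residualMap_domRestrict (hc : c ∈ C) (hc0 : c ≠ 0)
    (hmin : ∀ x ∈ C, x ≠ 0 → hammingNorm c ≤ hammingNorm x) :
    LinearMap.ker ((residualMap c).domRestrict C) = Submodule.span (ZMod 2) {⟨c, hc⟩} := by
  refine le_antisymm (fun x hx => ?_) ?_
  · by_cases hx0 : x = 0
    · simp [hx0]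
    by_cases hxc : (x : ι → ZMod 2) = c
    · exact Submodule.subset_span (Subtype.ext hxc)
    have h := hammingNorm_le_two_mul_hammingNorm_residualMap hc hmin x.2
      (fun h => hx0 (Subtype.ext h)) hxc
    rw [show residualMap c x = 0 from LinearMap.mem_ker.mp hx, hammingNorm_zero] at h
    exact absurd (hammingNorm_eq_zero.mp (Nat.le_zero.mp h)) hc0
  · rw [Submodule.span_le, Set.singleton_subset_iff]
    exact residualMap_self c

theorem finrank_map_residualMap_add_one (hc : c ∈ C) (hc0 : c ≠ 0)
    (hmin : ∀ x ∈ C, x ≠ 0 → hammingNorm c ≤ hammingNorm x) :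
    Module.finrank (ZMod 2) (C.map (residualMap c)) + 1 = Module.finrank (ZMod 2) C := by
  have h := LinearMap.finrank_range_add_finrank_ker ((residualMap c).domRestrict C)
  rwa [LinearMap.range_domRestrict, ker_residualMap_domRestrict hc hc0 hmin,
    finrank_span_singleton (fun h => hc0 (congrArg Subtype.val h))] at h

theorem le_hammingNorm_of_mem_map_residualMap (hc : c ∈ C)
    (hmin : ∀ x ∈ C, x ≠ 0 → hammingNorm c ≤ hammingNorm x)
    {y : {i // c i = 0} → ZMod 2} (hy : y ∈ C.map (residualMap c)) (hy0 : y ≠ 0) :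
    (hammingNorm c + 1) / 2 ≤ hammingNorm y := by
  obtain ⟨x, hx, rfl⟩ := hy
  have hx0 : x ≠ 0 := fun h => hy0 (by rw [h, map_zero])
  have hxc : x ≠ c := fun h => hy0 (by rw [h, residualMap_self])
  have := hammingNorm_le_two_mul_hammingNorm_residualMap hc hmin hx hx0 hxc
  omega

end Residual

theorem griesmerLength_le_card {ι : Type*} [Fintype ι] {k d : ℕ}
    (C : Submodule (ZMod 2) (ι → ZMod 2)) (hk : Module.finrank (ZMod 2) C = k)
    (hd : ∀ x ∈ C, x ≠ 0 → d ≤ hammingNorm x) :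
    griesmerLength k d ≤ Fintype.card ι := by
  induction k generalizing ι d with
  | zero => exact Nat.zero_le _
  | succ k ih =>
    have hC : C ≠ ⊥ := fun h => by subst h; simp at hk
    obtain ⟨c, ⟨hc, hc0⟩, hmin⟩ := Set.exists_min_image {x | x ∈ C ∧ x ≠ 0} hammingNorm
      (Set.toFinite _) (Submodule.exists_mem_ne_zero_of_ne_bot hC)
    have hmin' : ∀ x ∈ C, x ≠ 0 → hammingNorm c ≤ hammingNorm x :=
      fun x hx hx0 => hmin x ⟨hx, hx0⟩
    have hdc := hd c hc hc0
    have hres := ih (C.map (residualMap c))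
      (by have := finrank_map_residualMap_add_one hc hc0 hmin'; omega)
      (fun y hy hy0 => (Nat.div_le_div_right (Nat.add_le_add_right hdc 1)).trans
        (le_hammingNorm_of_mem_map_residualMap hc hmin' hy hy0))
    have := card_zeros_add_hammingNorm c
    rw [griesmerLength]
    omega

theorem two_mul_card_ne_zero {M : Type*} [AddGroup M] [Fintype M] [DecidableEq M]
    (f : M →+ ZMod 2) (hf : f ≠ 0) :
    2 * #{x | f x ≠ 0} = Fintype.card M := by
  obtain ⟨x₀, hx₀⟩ : ∃ x₀, f x₀ ≠ 0 := by
    by_contra! h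
    exact hf (AddMonoidHom.ext h)
  have hfiber := AddMonoidHom.card_fiber_eq_of_mem_range f (x := 0) ⟨0, map_zero f⟩ ⟨x₀, rfl⟩
  have hne : ∀ x, f x = f x₀ ↔ f x ≠ 0 := by
    have : ∀ a b : ZMod 2, b ≠ 0 → (a = b ↔ a ≠ 0) := by decide
    exact fun x => this _ _ hx₀
  simp only [hne] at hfiber
  have hsplit := card_filter_add_card_filter_not (s := univ) (p := fun x => f x = 0)
  rw [card_univ] at hsplit
  simp only [ne_eq] at hfiber ⊢
  omega

/-- Encoding map of the simplex code: its generator matrix has the nonzero vectors of `F₂^κ` as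
columns. -/
def simplexMap (κ : Type*) [Fintype κ] :
    (κ → ZMod 2) →ₗ[ZMod 2] ({u : κ → ZMod 2 // u ≠ 0} → ZMod 2) :=
  (Matrix.of fun u : {u : κ → ZMod 2 // u ≠ 0} => (u : κ → ZMod 2)).mulVecLin

theorem hammingNorm_simplexMap {κ : Type*} [Fintype κ] [DecidableEq κ] {v : κ → ZMod 2}
    (hv : v ≠ 0) :
    hammingNorm (simplexMap κ v) = 2 ^ (Fintype.card κ - 1) := by
  obtain ⟨i, hi⟩ : ∃ i, v i ≠ 0 := by
    by_contra! h
    exact hv (funext h)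
  have hf : (AddMonoidHom.mk' (fun u : κ → ZMod 2 => u ⬝ᵥ v) (fun a b => add_dotProduct a b v))
      ≠ 0 := fun h => by
    simpa [single_dotProduct, hi] using DFunLike.congr_fun h (Pi.single i 1)
  have hcount : 2 * #{u : κ → ZMod 2 | u ⬝ᵥ v ≠ 0} = 2 ^ Fintype.card κ := by
    simpa using two_mul_card_ne_zero _ hf
  have hsupp : hammingNorm (simplexMap κ v) = #{u : κ → ZMod 2 | u ⬝ᵥ v ≠ 0} := by
    refine (hammingNorm_restrict (· ≠ 0) (· ⬝ᵥ v)).trans (congrArg card (filter_congr ?_))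
    exact fun u _ => and_iff_right_of_imp fun h hu => h (by simp [hu])
  obtain ⟨n, hn⟩ := Nat.exists_eq_add_one_of_ne_zero (Fintype.card_pos_iff.mpr ⟨i⟩).ne'
  rw [hsupp, hn, Nat.add_sub_cancel]
  rw [hn, pow_succ] at hcount
  omega

theorem sum_apply_mul_apply_eq_zero {κ : Type*} [Fintype κ] [DecidableEq κ] {i j l : κ}
    (hli : l ≠ i) (hlj : l ≠ j) : ∑ u : κ → ZMod 2, u i * u j = 0 := by
  -- flipping coordinate `l` pairs up equal terms, which cancel in characteristic 2
  let flip : (κ → ZMod 2) → (κ → ZMod 2) := fun u => u + Pi.single l 1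
  have flip_apply : ∀ u, ∀ t ≠ l, flip u t = u t := fun u t ht => by
    simp [flip, Pi.single_eq_of_ne ht]
  refine sum_ninvolution flip (fun u => ?_) (fun u _ h => ?_) (fun _ => mem_univ _) (fun u => ?_)
  · rw [flip_apply u i hli.symm, flip_apply u j hlj.symm]
    exact CharTwo.add_self_eq_zero _
  · simpa [flip] using congrFun h l
  · funext t
    simp [flip, add_assoc, CharTwo.add_self_eq_zero]

theorem sum_simplexMap_mul_simplexMap {κ : Type*} [Fintype κ] [DecidableEq κ]
    (hκ : 2 < Fintype.card κ) (v w : κ → ZMod 2) :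
    ∑ u, simplexMap κ v u * simplexMap κ w u = 0 := by
  have hpair : ∀ i j : κ, ∑ u : κ → ZMod 2, u i * u j = 0 := fun i j => by
    obtain ⟨l, -, hl⟩ := exists_mem_notMem_of_card_lt_card
      (card_le_two.trans_lt (hκ.trans_eq card_univ.symm) : #{i, j} < #(univ : Finset κ))
    simp only [mem_insert, mem_singleton, not_or] at hl
    exact sum_apply_mul_apply_eq_zero hl.1 hl.2
  let g : (κ → ZMod 2) → ZMod 2 := fun u => (u ⬝ᵥ v) * (u ⬝ᵥ w)
  calc ∑ u, simplexMap κ v u * simplexMap κ w u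
      = ∑ u : {u : κ → ZMod 2 // u ≠ 0}, g u := rfl
    _ = ∑ u, g u := (sum_subtype _ (fun _ => mem_filter_univ _) g).symm.trans
        (sum_filter_of_ne fun u _ h hu => h (by simp [g, hu]))
    _ = ∑ u : κ → ZMod 2, ∑ i, ∑ j, v i * w j * (u i * u j) := sum_congr rfl fun u _ => by
        simp only [g, dotProduct, sum_mul_sum]
        exact sum_congr rfl fun i _ => sum_congr rfl fun j _ => by ring
    _ = ∑ i, ∑ j, v i * w j * ∑ u : κ → ZMod 2, u i * u j := by
        simp only [mul_sum]
        rw [sum_comm]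
        exact sum_congr rfl fun i _ => sum_comm
    _ = 0 := by simp [hpair]

theorem injective_of_hammingNorm_eq_add {ι ι' : Type*} [Fintype ι] [Fintype ι'] {t : ℕ}
    {C : Submodule (ZMod 2) (ι → ZMod 2)} (φ : C →ₗ[ZMod 2] (ι' → ZMod 2))
    (hφ : ∀ x : C, x ≠ 0 → hammingNorm (φ x) = hammingNorm (x : ι → ZMod 2) + t) :
    Function.Injective φ := by
  refine (injective_iff_map_eq_zero φ).mpr fun x hx => by_contra fun hx0 => ?_
  have := hφ x hx0
  rw [hx, hammingNorm_zero] at this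
  exact hx0 (Subtype.ext (hammingNorm_eq_zero.mp (by omega)))

theorem isMinDist_range_of_hammingNorm_eq_add {n n' d t : ℕ}
    {C : Submodule (ZMod 2) (Fin n → ZMod 2)} (φ : C →ₗ[ZMod 2] (Fin n' → ZMod 2))
    (hφ : ∀ x : C, x ≠ 0 → hammingNorm (φ x) = hammingNorm (x : Fin n → ZMod 2) + t)
    (hd : IsMinDist C d) : IsMinDist (LinearMap.range φ) (d + t) := by
  obtain ⟨⟨x, hxC, hx0, hxd⟩, hmin⟩ := hd
  have hx0' : (⟨x, hxC⟩ : C) ≠ 0 := fun h => hx0 (congrArg Subtype.val h)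
  refine ⟨⟨φ ⟨x, hxC⟩, LinearMap.mem_range_self _ _, ?_, ?_⟩, ?_⟩
  · exact (map_ne_zero_iff φ (injective_of_hammingNorm_eq_add φ hφ)).mpr hx0'
  · rw [hφ _ hx0', ← hxd]
  · rintro _ ⟨y, rfl⟩ hy0
    have hy0' : y ≠ 0 := fun h => hy0 (by rw [h, map_zero])
    rw [hφ y hy0']
    exact Nat.add_le_add_right (hmin y y.2 fun h => hy0' (Subtype.ext h)) t

theorem exists_isSO_append_simplex {n k d : ℕ} (hk : 2 < k)
    (C : Submodule (ZMod 2) (Fin n → ZMod 2)) (hSO : IsSO C)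
    (hdim : Module.finrank (ZMod 2) C = k) (hd : IsMinDist C d) (r : ℕ) :
    ∃ C' : Submodule (ZMod 2) (Fin (n + (2 ^ k - 1) * r) → ZMod 2),
      IsSO C' ∧ Module.finrank (ZMod 2) C' = k ∧ IsMinDist C' (d + 2 ^ (k - 1) * r) := by
  classical
  let e : C ≃ₗ[ZMod 2] (Fin k → ZMod 2) := (Module.finBasisOfFinrankEq _ _ hdim).equivFun
  let σ : Fin (n + (2 ^ k - 1) * r) ≃ Fin n ⊕ (Fin r × {u : Fin k → ZMod 2 // u ≠ 0}) :=
    (Fintype.equivFinOfCardEq (by simp [Fintype.card_subtype_compl, mul_comm])).symm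
  let φ : C →ₗ[ZMod 2] (Fin (n + (2 ^ k - 1) * r) → ZMod 2) :=
    LinearMap.funLeft _ _ σ ∘ₗ (LinearEquiv.sumArrowLequivProdArrow _ _ _ _).symm.toLinearMap ∘ₗ
      C.subtype.prod (LinearMap.funLeft _ _ Prod.snd ∘ₗ simplexMap (Fin k) ∘ₗ e.toLinearMap)
  have hφ : ∀ x, φ x = Sum.elim (x : Fin n → ZMod 2)
      (fun p : Fin r × {u : Fin k → ZMod 2 // u ≠ 0} => simplexMap (Fin k) (e x) p.2) ∘ σ :=
    fun _ => rfl
  have hwt : ∀ x : C, x ≠ 0 →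
      hammingNorm (φ x) = hammingNorm (x : Fin n → ZMod 2) + 2 ^ (k - 1) * r := fun x hx => by
    rw [hφ, hammingNorm_comp_equiv, hammingNorm_sumElim, hammingNorm_comp_snd,
      hammingNorm_simplexMap (e.map_ne_zero_iff.mpr hx), Fintype.card_fin, Fintype.card_fin,
      mul_comm]
  have horth : ∀ x y : C, ∑ i, φ x i * φ y i = 0 := fun x y => by
    simp only [hφ, Function.comp_apply]
    rw [σ.sum_comp (fun j => Sum.elim _ _ j * Sum.elim _ _ j), Fintype.sum_sum_type]
    have hS := sum_simplexMap_mul_simplexMap (κ := Fin k) (by rwa [Fintype.card_fin]) (e x) (e y)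
    simp [Fintype.sum_prod_type, hS, hSO x x.2 y y.2]
  refine ⟨LinearMap.range φ, ?_, ?_, isMinDist_range_of_hammingNorm_eq_add φ hwt hd⟩
  · rintro _ ⟨x, rfl⟩ _ ⟨y, rfl⟩
    exact horth x y
  · rw [LinearMap.finrank_range_of_inj (injective_of_hammingNorm_eq_add φ hwt), hdim]

/-- If there exists a binary self-orthogonal `[53, 5, 26]` code, then for every `m ≥ 1`
there exists a binary self-orthogonal `[31m + 22, 5, 16m + 10]` code; combined with the
Griesmer bound, `d_so(31m + 22, 5) = d(31m + 22, 5) = 16m + 10`. -/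
theorem dso_31m22 
    (h : ∃ C : Submodule (ZMod 2) (Fin 53 → ZMod 2),
      IsSO C ∧ Module.finrank (ZMod 2) C = 5 ∧ IsMinDist C 26) :
    ∀ m : ℕ, 1 ≤ m →
      (∃ C : Submodule (ZMod 2) (Fin (31 * m + 22) → ZMod 2),
        IsSO C ∧ Module.finrank (ZMod 2) C = 5 ∧ IsMinDist C (16 * m + 10)) ∧
      dSO (31 * m + 22) 5 = 16 * m + 10 ∧ dLin (31 * m + 22) 5 = 16 * m + 10 := by
  obtain ⟨C₀, hSO₀, hdim₀, hd₀⟩ := h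
  intro m hm
  have hupper : ∀ C : Submodule (ZMod 2) (Fin (31 * m + 22) → ZMod 2),
      Module.finrank (ZMod 2) C = 5 → ∀ d, IsMinDist C d → d ≤ 16 * m + 10 := fun C hk d hd => by
    have := griesmerLength_le_card C hk hd.2
    simp only [griesmerLength, Fintype.card_fin] at this
    omega
  obtain ⟨C, hSO, hdim, hd⟩ : ∃ C : Submodule (ZMod 2) (Fin (31 * m + 22) → ZMod 2),
      IsSO C ∧ Module.finrank (ZMod 2) C = 5 ∧ IsMinDist C (16 * m + 10) := by
    obtain ⟨r, rfl⟩ := Nat.exists_eq_add_of_le' hm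
    have := exists_isSO_append_simplex (by norm_num) C₀ hSO₀ hdim₀ hd₀ r
    rwa [show 53 + (2 ^ 5 - 1) * r = 31 * (r + 1) + 22 by ring,
      show 26 + 2 ^ (5 - 1) * r = 16 * (r + 1) + 10 by ring] at this
  refine ⟨⟨C, hSO, hdim, hd⟩, ?_, ?_⟩
  · exact IsGreatest.csSup_eq ⟨⟨C, hSO, hdim, hd⟩, fun d ⟨C', _, hk', hd'⟩ => hupper C' hk' d hd'⟩
  · exact IsGreatest.csSup_eq ⟨⟨C, hdim, hd⟩, fun d ⟨C', hk', hd'⟩ => hupper C' hk' d hd'⟩
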